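/- Let n, τ, U be as in the context, let γ : [0,s₀] → U be a geodesic curve with Δτ(γ(0)) = 0, and assume s₀ ≤ n₀. Then the amplitude defined by the exponential formula A = (1/2)·exp( −(1/2)·∫₀^{s₀} (Δτ/n²)(γ(s)) ds ) satisfies the lower bound A ≥ A₀ := (1/2)·exp( −3·n₀₀²·n₀²/2 ). (The estimate from below of the amplitude of the first term of the expansion of the solution of the forward problem, Theorem 3.1, part 2.) -/

import Mathlib

/-!
Differentiating the eikonal equation `|∇τ|² = n²` twice and exchanging third derivatives of `τ`
gives `∇τ · ∇(Δτ) = |∇n|² + n Δn - |D²τ|² ≤ 6 n₀₀²`. The geodesic has `γ' = ∇τ / n²`, so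
`(Δτ ∘ γ)' ≤ 6 n₀₀²` and, since `Δτ(γ(0)) = 0`, `Δτ(γ(s)) ≤ 6 n₀₀² s`. As `n ≥ 1`, integrating
gives `∫₀^{s₀} Δτ/n² ≤ 3 n₀₀² s₀² ≤ 3 n₀₀² n₀²`, and the exponential is monotone.
-/

open Real Set

noncomputable def pd (i : Fin 3) (f : (Fin 3 → ℝ) → ℝ) (x : Fin 3 → ℝ) : ℝ :=
  fderiv ℝ f x (Pi.single i 1)

noncomputable def lap (f : (Fin 3 → ℝ) → ℝ) (x : Fin 3 → ℝ) : ℝ :=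
  ∑ i : Fin 3, pd i (pd i f) x

open Filter Topology

section PartialDerivatives

variable {f g : (Fin 3 → ℝ) → ℝ} {x : Fin 3 → ℝ}

lemma fderiv_apply_eq_sum_pd (f : (Fin 3 → ℝ) → ℝ) (x v : Fin 3 → ℝ) :
    fderiv ℝ f x v = ∑ i, v i * pd i f x := by
  conv_lhs => rw [pi_eq_sum_univ' v]
  simp [pd, map_sum]

lemma contDiffAt_pd {m : ℕ} (hf : ContDiffAt ℝ (m + 1) f x) (i : Fin 3) :
    ContDiffAt ℝ m (pd i f) x :=
  (hf.fderiv_right le_rfl).clm_apply contDiffAt_const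

lemma differentiableAt_pd (hf : ContDiffAt ℝ 2 f x) (i : Fin 3) :
    DifferentiableAt ℝ (pd i f) x :=
  (contDiffAt_pd (m := 1) hf i).differentiableAt one_ne_zero

lemma contDiffAt_lap {m : ℕ} (hf : ContDiffAt ℝ (m + 2) f x) : ContDiffAt ℝ m (lap f) x :=
  ContDiffAt.sum fun i _ => contDiffAt_pd (contDiffAt_pd (m := m + 1) hf i) i

lemma Filter.EventuallyEq.pd_eq (h : f =ᶠ[𝓝 x] g) (i : Fin 3) : pd i f x = pd i g x := by
  rw [pd, pd, h.fderiv_eq]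

lemma pd_fun_sum {f : Fin 3 → (Fin 3 → ℝ) → ℝ} (hf : ∀ j, DifferentiableAt ℝ (f j) x)
    (i : Fin 3) : pd i (fun y => ∑ j, f j y) x = ∑ j, pd i (f j) x := by
  simp [pd, fderiv_fun_sum fun j _ => hf j]

lemma pd_fun_mul (hf : DifferentiableAt ℝ f x) (hg : DifferentiableAt ℝ g x) (i : Fin 3) :
    pd i (fun y => f y * g y) x = pd i f x * g x + f x * pd i g x := by
  simp only [pd, fderiv_fun_mul hf hg, add_apply, smul_apply, smul_eq_mul]
  ring

lemma pd_fun_sq (hf : DifferentiableAt ℝ f x) (i : Fin 3) :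
    pd i (fun y => f y ^ 2) x = 2 * f x * pd i f x := by
  simp only [sq, pd_fun_mul hf hf]
  ring

lemma pd_comm (hf : ContDiffAt ℝ 2 f x) (i j : Fin 3) : pd i (pd j f) x = pd j (pd i f) x := by
  have hdiff : DifferentiableAt ℝ (fderiv ℝ f) x :=
    (hf.fderiv_right (m := 1) (by norm_num)).differentiableAt one_ne_zero
  have hpd : ∀ k l, pd k (pd l f) x = fderiv ℝ (fderiv ℝ f) x (Pi.single k 1) (Pi.single l 1) :=
    fun k l => by
      rw [pd, show pd l f = fun y => fderiv ℝ f y (Pi.single l 1) from rfl,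
        fderiv_clm_apply hdiff (differentiableAt_const _)]
      simp
  rw [hpd, hpd]
  exact (hf.isSymmSndFDerivAt (by simp)).eq _ _

lemma pd_lap (hf : ContDiffAt ℝ 3 f x) (i : Fin 3) : pd i (lap f) x = lap (pd i f) x := by
  have hf2 : ∀ j, ContDiffAt ℝ 2 (pd j f) x := fun j => contDiffAt_pd (m := 2) hf j
  have hcomm : ∀ j, pd i (pd j f) =ᶠ[𝓝 x] pd j (pd i f) := fun j =>
    (hf.eventually (by simp)).mono fun y hy => pd_comm (hy.of_le (by norm_num)) i j
  calc pd i (lap f) x = ∑ j, pd i (pd j (pd j f)) x :=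
        pd_fun_sum (fun j => differentiableAt_pd (hf2 j) j) i
    _ = ∑ j, pd j (pd i (pd j f)) x := by simp only [pd_comm (hf2 _) i]
    _ = lap (pd i f) x := Finset.sum_congr rfl fun j _ => (hcomm j).pd_eq j

end PartialDerivatives

section Eikonal

variable {n τ : (Fin 3 → ℝ) → ℝ} {x : Fin 3 → ℝ}

lemma eikonal_pd (hτ : ContDiffAt ℝ 2 τ x) (hn : DifferentiableAt ℝ n x)
    (heik : (fun y => ∑ i, pd i τ y ^ 2) =ᶠ[𝓝 x] fun y => n y ^ 2) (j : Fin 3) :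
    ∑ i, pd i τ x * pd j (pd i τ) x = n x * pd j n x := by
  have h := heik.pd_eq j
  rw [pd_fun_sum (f := fun i y => pd i τ y ^ 2) fun i => (differentiableAt_pd hτ i).pow 2,
    pd_fun_sq hn] at h
  simp only [pd_fun_sq (differentiableAt_pd hτ _), mul_assoc, ← Finset.mul_sum] at h
  linarith

lemma eikonal_pd_lap (hτ : ContDiffAt ℝ 3 τ x) (hn : ContDiffAt ℝ 2 n x)
    (heik : (fun y => ∑ i, pd i τ y ^ 2) =ᶠ[𝓝 x] fun y => n y ^ 2) :
    ∑ i, pd i τ x * pd i (lap τ) x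
      = ∑ j, pd j n x ^ 2 + n x * lap n x - ∑ j, ∑ i, pd j (pd i τ) x ^ 2 := by
  have hτ2 : ContDiffAt ℝ 2 τ x := hτ.of_le (by norm_num)
  have hpdτ : ∀ i, ContDiffAt ℝ 2 (pd i τ) x := fun i => contDiffAt_pd (m := 2) hτ i
  have hfirst : ∀ j, (fun y => ∑ i, pd i τ y * pd j (pd i τ) y) =ᶠ[𝓝 x]
      fun y => n y * pd j n y := fun j =>
    ((hτ.eventually (by simp)).and ((hn.eventually (by simp)).and heik.eventually_nhds)).mono
      fun y ⟨hτy, hny, heiky⟩ =>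
        eikonal_pd (hτy.of_le (by norm_num)) (hny.differentiableAt (by norm_num)) heiky j
  have hsecond : ∀ j, ∑ i, pd i τ x * pd j (pd j (pd i τ)) x
      = pd j n x ^ 2 + n x * pd j (pd j n) x - ∑ i, pd j (pd i τ) x ^ 2 := by
    intro j
    have h := (hfirst j).pd_eq j
    rw [pd_fun_sum (f := fun i y => pd i τ y * pd j (pd i τ) y)
        (fun i => (differentiableAt_pd hτ2 i).mul (differentiableAt_pd (hpdτ i) j)),
      pd_fun_mul (hn.differentiableAt (by norm_num)) (differentiableAt_pd hn j)] at h
    simp only [pd_fun_mul (differentiableAt_pd hτ2 _) (differentiableAt_pd (hpdτ _) j),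
      Finset.sum_add_distrib] at h
    simp only [sq]
    linarith
  calc ∑ i, pd i τ x * pd i (lap τ) x = ∑ j, ∑ i, pd i τ x * pd j (pd j (pd i τ)) x := by
        simp only [pd_lap hτ, lap, Finset.mul_sum]
        exact Finset.sum_comm
    _ = _ := by
        simp only [hsecond, Finset.sum_sub_distrib, Finset.sum_add_distrib, ← Finset.mul_sum, lap]

lemma eikonal_pd_lap_le (hτ : ContDiffAt ℝ 3 τ x) (hn : ContDiffAt ℝ 2 n x)
    (heik : (fun y => ∑ i, pd i τ y ^ 2) =ᶠ[𝓝 x] fun y => n y ^ 2) {C : ℝ}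
    (hC0 : |n x| ≤ C) (hC1 : ∀ j, |pd j n x| ≤ C) (hC2 : ∀ j, |pd j (pd j n) x| ≤ C) :
    ∑ i, pd i τ x * pd i (lap τ) x ≤ 6 * C ^ 2 := by
  have hC : 0 ≤ C := (abs_nonneg _).trans hC0
  have hgrad : ∑ j, pd j n x ^ 2 ≤ 3 * C ^ 2 := by
    calc ∑ j, pd j n x ^ 2 ≤ ∑ _j : Fin 3, C ^ 2 :=
          Finset.sum_le_sum fun j _ => sq_le_sq' (abs_le.mp (hC1 j)).1 (abs_le.mp (hC1 j)).2
      _ = 3 * C ^ 2 := by simp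
  have hlap : |lap n x| ≤ 3 * C := by
    calc |lap n x| ≤ ∑ j, |pd j (pd j n) x| := Finset.abs_sum_le_sum_abs _ _
      _ ≤ ∑ _j : Fin 3, C := Finset.sum_le_sum fun j _ => hC2 j
      _ = 3 * C := by simp
  have hmul : n x * lap n x ≤ 3 * C ^ 2 := by
    calc n x * lap n x ≤ |n x| * |lap n x| := by rw [← abs_mul]; exact le_abs_self _
      _ ≤ C * (3 * C) := mul_le_mul hC0 hlap (abs_nonneg _) hC
      _ = 3 * C ^ 2 := by ring
  have hhess : 0 ≤ ∑ j, ∑ i, pd j (pd i τ) x ^ 2 := by positivity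
  rw [eikonal_pd_lap hτ hn heik]
  linarith

end Eikonal

lemma sub_le_mul_sub_of_hasDerivWithinAt_le {f f' : ℝ → ℝ} {a b K : ℝ}
    (hf : ∀ s ∈ Icc a b, HasDerivWithinAt f (f' s) (Icc a b) s)
    (hf' : ∀ s ∈ Icc a b, f' s ≤ K) : ∀ s ∈ Icc a b, f s - f a ≤ K * (s - a) := by
  have hmono : MonotoneOn (fun t => K * t - f t) (Icc a b) := by
    refine monotoneOn_of_hasDerivWithinAt_nonneg (convex_Icc a b)
      ((continuousOn_const.mul continuousOn_id).sub fun s hs => (hf s hs).continuousWithinAt)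
      (fun s hs => ?_) fun s hs => sub_nonneg.mpr (hf' s (interior_subset hs))
    exact (((hasDerivAt_id s).const_mul K).hasDerivWithinAt.sub
      ((hf s (interior_subset hs)).mono interior_subset)).congr_deriv (by simp)
  intro s hs
  have := hmono (left_mem_Icc.mpr (hs.1.trans hs.2)) hs hs.1
  linarith

lemma intervalIntegral_le_of_le_mul {f : ℝ → ℝ} {b K : ℝ} (hb : 0 ≤ b) (hK : 0 ≤ K)
    (hf : ∀ s ∈ Icc 0 b, f s ≤ K * s) : ∫ s in (0 : ℝ)..b, f s ≤ K * b ^ 2 / 2 := by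
  by_cases hint : IntervalIntegrable f MeasureTheory.volume 0 b
  · calc ∫ s in (0 : ℝ)..b, f s ≤ ∫ s in (0 : ℝ)..b, K * s :=
          intervalIntegral.integral_mono_on hb hint
            ((continuous_const.mul continuous_id).intervalIntegrable 0 b) hf
      _ = K * b ^ 2 / 2 := by rw [intervalIntegral.integral_const_mul, integral_id]; ring
  · rw [intervalIntegral.integral_undef hint]
    positivity

lemma geodesic_comp_sub_le {n τ φ : (Fin 3 → ℝ) → ℝ} {U : Set (Fin 3 → ℝ)} {γ : ℝ → (Fin 3 → ℝ)}
    {s₀ K : ℝ} (hφ : ∀ x ∈ U, DifferentiableAt ℝ φ x) (hn : ∀ x ∈ U, 0 < n x)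
    (hK : ∀ x ∈ U, ∑ i, pd i τ x * pd i φ x ≤ K * n x ^ 2)
    (hγU : ∀ s ∈ Icc 0 s₀, γ s ∈ U)
    (hgeo : ∀ s ∈ Icc 0 s₀,
      HasDerivWithinAt γ (fun i => pd i τ (γ s) / (n (γ s)) ^ 2) (Icc 0 s₀) s) :
    ∀ s ∈ Icc 0 s₀, φ (γ s) - φ (γ 0) ≤ K * s := by
  have hderiv : ∀ s ∈ Icc 0 s₀, HasDerivWithinAt (fun t => φ (γ t))
      ((∑ i, pd i τ (γ s) * pd i φ (γ s)) / n (γ s) ^ 2) (Icc 0 s₀) s := by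
    intro s hs
    refine ((hφ _ (hγU s hs)).hasFDerivAt.comp_hasDerivWithinAt s (hgeo s hs)).congr_deriv ?_
    rw [fderiv_apply_eq_sum_pd, Finset.sum_div]
    exact Finset.sum_congr rfl fun i _ => by ring
  have hle : ∀ s ∈ Icc 0 s₀, (∑ i, pd i τ (γ s) * pd i φ (γ s)) / n (γ s) ^ 2 ≤ K :=
    fun s hs => (div_le_iff₀ (pow_pos (hn _ (hγU s hs)) 2)).mpr (hK _ (hγU s hs))
  simpa using sub_le_mul_sub_of_hasDerivWithinAt_le hderiv hle

theorem stmt4_general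
    (n₀ n₀₀ : ℝ)
    (n : (Fin 3 → ℝ) → ℝ) (hn : ContDiff ℝ 2 n)
    (hn1 : ∀ x, 1 ≤ n x)
    (hb0 : ∀ x, |n x| ≤ n₀₀)
    (hb1 : ∀ x, ∀ i : Fin 3, |pd i n x| ≤ n₀₀)
    (hb2 : ∀ x, ∀ i j : Fin 3, |pd i (pd j n) x| ≤ n₀₀)
    (U : Set (Fin 3 → ℝ)) (hU : IsOpen U)
    (τ : (Fin 3 → ℝ) → ℝ) (hτ : ContDiffOn ℝ 3 τ U)
    (heik : ∀ x ∈ U, ∑ i : Fin 3, (pd i τ x) ^ 2 = (n x) ^ 2)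
    (s₀ : ℝ) (hs₀ : 0 ≤ s₀) (hs₀n₀ : s₀ ≤ n₀) (γ : ℝ → (Fin 3 → ℝ))
    (hγU : ∀ s ∈ Icc 0 s₀, γ s ∈ U)
    (hgeo : ∀ s ∈ Icc 0 s₀,
      HasDerivWithinAt γ (fun i => pd i τ (γ s) / (n (γ s)) ^ 2) (Icc 0 s₀) s)
    (hinit : lap τ (γ 0) = 0) :
    (1 / 2 : ℝ) * Real.exp (-(1 / 2) * ∫ s in (0:ℝ)..s₀, lap τ (γ s) / n (γ s) ^ 2)
      ≥ (1 / 2 : ℝ) * Real.exp (-(3 * n₀₀ ^ 2 * n₀ ^ 2) / 2) := by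
  have hτx : ∀ x ∈ U, ContDiffAt ℝ 3 τ x := fun x hx => hτ.contDiffAt (hU.mem_nhds hx)
  have hn_sq : ∀ x, 1 ≤ n x ^ 2 := fun x => one_le_pow₀ (hn1 x)
  have htransport : ∀ x ∈ U, ∑ i, pd i τ x * pd i (lap τ) x ≤ 6 * n₀₀ ^ 2 * n x ^ 2 :=
    fun x hx => (eikonal_pd_lap_le (hτx x hx) hn.contDiffAt
      (eventually_of_mem (hU.mem_nhds hx) heik) (hb0 x) (hb1 x) fun j => hb2 x j j).trans
      (le_mul_of_one_le_right (by positivity) (hn_sq x))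
  have hlap : ∀ s ∈ Icc 0 s₀, lap τ (γ s) ≤ 6 * n₀₀ ^ 2 * s := by
    simpa [hinit] using geodesic_comp_sub_le
      (fun x hx => (contDiffAt_lap (m := 1) (hτx x hx)).differentiableAt one_ne_zero)
      (fun x _ => zero_lt_one.trans_le (hn1 x)) htransport hγU hgeo
  have hint : ∫ s in (0:ℝ)..s₀, lap τ (γ s) / n (γ s) ^ 2 ≤ 6 * n₀₀ ^ 2 * s₀ ^ 2 / 2 :=
    intervalIntegral_le_of_le_mul hs₀ (by positivity) fun s hs =>
      have hpos : 0 ≤ 6 * n₀₀ ^ 2 * s := mul_nonneg (by positivity) hs.1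
      div_le_of_le_mul₀ (sq_nonneg _) hpos
        ((hlap s hs).trans (le_mul_of_one_le_right hpos (hn_sq _)))
  have hs₀_sq : s₀ ^ 2 ≤ n₀ ^ 2 := pow_le_pow_left₀ hs₀ hs₀n₀ 2
  rw [ge_iff_le]
  gcongr
  nlinarith [sq_nonneg n₀₀]

theorem stmt4
    (n₀ n₀₀ : ℝ) (hn₀ : 1 < n₀) (hn₀n₀₀ : n₀ < n₀₀)
    (n : (Fin 3 → ℝ) → ℝ) (hn : ContDiff ℝ 2 n)
    (hn1 : ∀ x, 1 ≤ n x) (hn2 : ∀ x, n x ≤ n₀)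
    (hb0 : ∀ x, |n x| ≤ n₀₀)
    (hb1 : ∀ x, ∀ i : Fin 3, |pd i n x| ≤ n₀₀)
    (hb2 : ∀ x, ∀ i j : Fin 3, |pd i (pd j n) x| ≤ n₀₀)
    (U : Set (Fin 3 → ℝ)) (hU : IsOpen U)
    (τ : (Fin 3 → ℝ) → ℝ) (hτ : ContDiffOn ℝ 3 τ U)
    (heik : ∀ x ∈ U, ∑ i : Fin 3, (pd i τ x) ^ 2 = (n x) ^ 2)
    (s₀ : ℝ) (hs₀ : 0 ≤ s₀) (hs₀n₀ : s₀ ≤ n₀) (γ : ℝ → (Fin 3 → ℝ))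
    (hγU : ∀ s ∈ Icc 0 s₀, γ s ∈ U)
    (hgeo : ∀ s ∈ Icc 0 s₀,
      HasDerivWithinAt γ (fun i => pd i τ (γ s) / (n (γ s)) ^ 2) (Icc 0 s₀) s)
    (hinit : lap τ (γ 0) = 0) :
    (1 / 2 : ℝ) * Real.exp (-(1 / 2) * ∫ s in (0:ℝ)..s₀, lap τ (γ s) / n (γ s) ^ 2)
      ≥ (1 / 2 : ℝ) * Real.exp (-(3 * n₀₀ ^ 2 * n₀ ^ 2) / 2) :=
  stmt4_general n₀ n₀₀ n hn hn1 hb0 hb1 hb2 U hU τ hτ heik s₀ hs₀ hs₀n₀ γ hγU hgeo hinit
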